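/- arXiv:1511.09056 — 2 statements merged into one kernel-verified Lean document; each statement's English description precedes it below -/
import Mathlib

section
/- Let f be a C^3 real function on an open interval U on which f is a diffeomorphism onto its image, with negative Schwarzian derivative Sf < 0 throughout U. Then for every point of U there is a neighborhood such that for all intervals M compactly contained in T with T contained in that neighborhood, the cross-ratio distortion satisfies D(f;M,T) < 1. -/
open Set Filter MeasureTheory

noncomputable section

/-- The Schwarzian derivative `Sf = (f''/f')' - (1/2) (f''/f')^2`. -/
def schwarzianDeriv (f : ℝ → ℝ) (x : ℝ) : ℝ :=
  deriv (fun y => deriv (deriv f) y / deriv f y) x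
    - (1 / 2) * (deriv (deriv f) x / deriv f x) ^ 2

/-- The cross-ratio `b(M,T) = |L||R| / (|L ∪ M| |M ∪ R|)` of the pair of intervals
`M = [m₁, m₂] ⋐ T = [t₁, t₂]`. -/
def crossRatioB (t₁ m₁ m₂ t₂ : ℝ) : ℝ :=
  ((m₁ - t₁) * (t₂ - m₂)) / ((m₂ - t₁) * (t₂ - m₁))

/-- The cross-ratio distortion `D(f; M, T) = b(f(M), f(T)) / b(M, T)`. -/
def crDistortion (f : ℝ → ℝ) (t₁ m₁ m₂ t₂ : ℝ) : ℝ :=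
  crossRatioB (f t₁) (f m₁) (f m₂) (f t₂) / crossRatioB t₁ m₁ m₂ t₂

/-!
On an interval where `f'` does not vanish, `f'` has constant sign (Darboux), and replacing `f`
by `-f` we may assume `f' > 0`. For `g = (f')^(-1/2)` one has `g'' = -(1/2) Sf g`, so `g` is
strictly convex. If `l` is the tangent line of `g` at `y`, the Möbius map `h` with `h(y) = 0` and
`h' = 1/l²` satisfies `f' = 1/g² < h'` away from `y`, which bounds the slopes of `f` from `y` to
either end of `T = [t₁, t₂]`. The two bounds combine to
`slope f t₁ y * slope f y t₂ < f'(y) * slope f t₁ t₂`, i.e. `ψ(y) = slope f t₁ y / slope f y t₂`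
is strictly increasing on `(t₁, t₂)`; and `D(f; M, T) = ψ(m₁) / ψ(m₂)`. In particular the
neighbourhood can be taken to be `U` itself.
-/

lemma strictMonoOn_of_forall_hasDerivAt_pos {D : Set ℝ} {f f' : ℝ → ℝ} (hD : Convex ℝ D)
    (hf : ∀ x ∈ D, HasDerivAt f (f' x) x) (hf' : ∀ x ∈ D, 0 < f' x) : StrictMonoOn f D :=
  strictMonoOn_of_hasDerivWithinAt_pos hD (fun x hx => (hf x hx).continuousAt.continuousWithinAt)
    (fun x hx => (hf x (interior_subset hx)).hasDerivWithinAt)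
    (fun x hx => hf' x (interior_subset hx))

lemma mul_slope_eq_add_mul_slope (f : ℝ → ℝ) (a b c : ℝ) :
    (c - a) * slope f a c = (b - a) * slope f a b + (c - b) * slope f b c := by
  simp only [← smul_eq_mul, sub_smul_slope, vsub_eq_sub]
  ring

lemma hasDerivAt_slope_right {f : ℝ → ℝ} {f' a y : ℝ} (hf : HasDerivAt f f' y) (hy : y ≠ a) :
    HasDerivAt (slope f a) ((f' - slope f a y) / (y - a)) y := by
  have hya : y - a ≠ 0 := sub_ne_zero.2 hy
  rw [slope_fun_def_field]
  refine ((hf.sub_const (f a)).fun_div ((hasDerivAt_id' y).sub_const a) hya).congr_deriv ?_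
  field_simp

lemma hasDerivAt_slope_left {f : ℝ → ℝ} {f' b y : ℝ} (hf : HasDerivAt f f' y) (hy : y ≠ b) :
    HasDerivAt (fun x => slope f x b) ((slope f y b - f') / (b - y)) y := by
  have h := hasDerivAt_slope_right hf hy
  simp only [← slope_comm f b] at h ⊢
  convert h using 1
  rw [div_eq_div_iff (sub_ne_zero.2 hy.symm) (sub_ne_zero.2 hy)]
  ring

lemma hasDerivAt_slope_div_slope {f : ℝ → ℝ} {f' t₁ y t₂ : ℝ} (hf : HasDerivAt f f' y)
    (h₁ : t₁ < y) (h₂ : y < t₂) (hne : slope f y t₂ ≠ 0) :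
    HasDerivAt (fun x => slope f t₁ x / slope f x t₂)
      ((t₂ - t₁) * (f' * slope f t₁ t₂ - slope f t₁ y * slope f y t₂)
        / ((y - t₁) * (t₂ - y)) / slope f y t₂ ^ 2) y := by
  refine ((hasDerivAt_slope_right hf h₁.ne').fun_div (hasDerivAt_slope_left hf h₂.ne)
    hne).congr_deriv ?_
  have ha : y - t₁ ≠ 0 := sub_ne_zero.2 h₁.ne'
  have hb : t₂ - y ≠ 0 := sub_ne_zero.2 h₂.ne'
  congr 1
  field_simp
  linear_combination (-f') * mul_slope_eq_add_mul_slope f t₁ y t₂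

lemma crDistortion_eq_slope (f : ℝ → ℝ) (t₁ m₁ m₂ t₂ : ℝ) :
    crDistortion f t₁ m₁ m₂ t₂
      = (slope f t₁ m₁ / slope f m₁ t₂) / (slope f t₁ m₂ / slope f m₂ t₂) := by
  simp only [crDistortion, crossRatioB, slope_def_field, div_eq_mul_inv, mul_inv, inv_inv]
  ring

lemma crDistortion_neg (f : ℝ → ℝ) (t₁ m₁ m₂ t₂ : ℝ) :
    crDistortion (fun x => -f x) t₁ m₁ m₂ t₂ = crDistortion f t₁ m₁ m₂ t₂ := by
  simp only [crDistortion, crossRatioB]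
  ring_nf

lemma crDistortion_lt_one_of_slope_mul_slope_lt {f f' : ℝ → ℝ} {t₁ m₁ m₂ t₂ : ℝ}
    (hf : ∀ y ∈ Icc t₁ t₂, HasDerivAt f (f' y) y) (hf' : ∀ y ∈ Icc t₁ t₂, 0 < f' y)
    (hkey : ∀ y ∈ Ioo t₁ t₂, slope f t₁ y * slope f y t₂ < f' y * slope f t₁ t₂)
    (h₁ : t₁ < m₁) (h₂ : m₁ < m₂) (h₃ : m₂ < t₂) : crDistortion f t₁ m₁ m₂ t₂ < 1 := by
  have hmono : StrictMonoOn f (Icc t₁ t₂) :=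
    strictMonoOn_of_forall_hasDerivAt_pos (convex_Icc _ _) hf hf'
  have hslope {a b : ℝ} (hab : a < b) (ha : t₁ ≤ a) (hb : b ≤ t₂) : 0 < slope f a b :=
    hmono.slope_pos ⟨ha, hab.le.trans hb⟩ ⟨ha.trans hab.le, hb⟩ hab.ne
  have hψ : StrictMonoOn (fun y => slope f t₁ y / slope f y t₂) (Ioo t₁ t₂) := by
    refine strictMonoOn_of_forall_hasDerivAt_pos (convex_Ioo _ _)
      (fun y hy => hasDerivAt_slope_div_slope (hf y (Ioo_subset_Icc_self hy)) hy.1 hy.2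
        (hslope hy.2 hy.1.le le_rfl).ne') fun y hy => ?_
    have hT : 0 < t₂ - t₁ := sub_pos.2 (hy.1.trans hy.2)
    have hab : 0 < (y - t₁) * (t₂ - y) := mul_pos (sub_pos.2 hy.1) (sub_pos.2 hy.2)
    exact div_pos (div_pos (mul_pos hT (sub_pos.2 (hkey y hy))) hab)
      (pow_pos (hslope hy.2 hy.1.le le_rfl) 2)
  have hψm₂ : 0 < slope f t₁ m₂ / slope f m₂ t₂ :=
    div_pos (hslope (h₁.trans h₂) le_rfl (h₃.le)) (hslope h₃ (h₁.trans h₂).le le_rfl)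
  rw [crDistortion_eq_slope, div_lt_one hψm₂]
  exact hψ ⟨h₁, h₂.trans h₃⟩ ⟨h₁.trans h₂, h₃⟩ h₂

lemma slope_mul_lt_one_of_deriv_mul_sq_lt {f f' : ℝ → ℝ} {V : Set ℝ} {y t c s : ℝ}
    (hV : Convex ℝ V) (hf : ∀ x ∈ V, HasDerivAt f (f' x) x) (hf' : ∀ x ∈ V, 0 < f' x)
    (hc : 0 < c)
    (hlt : ∀ x ∈ V, x ≠ y → 0 < c + s * (x - y) → f' x * (c + s * (x - y)) ^ 2 < 1)
    (hy : y ∈ V) (ht : t ∈ V) (hty : t ≠ y) :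
    slope f y t * (c * (c + s * (t - y))) < 1 := by
  have hslope : 0 < slope f y t :=
    (strictMonoOn_of_forall_hasDerivAt_pos hV hf hf').slope_pos hy ht hty.symm
  rcases le_or_gt (c + s * (t - y)) 0 with hlt₀ | hlt₀
  · exact (mul_nonpos_of_nonneg_of_nonpos hslope.le
      (mul_nonpos_of_nonneg_of_nonpos hc.le hlt₀)).trans_lt one_pos
  have hseg : uIcc t y ⊆ V := hV.ordConnected.uIcc_subset ht hy
  have hl : ∀ x ∈ uIcc t y, 0 < c + s * (x - y) := by
    intro x hx
    rcases le_total 0 s with hs | hs <;> rcases mem_uIcc.1 hx with ⟨h₁, h₂⟩ | ⟨h₁, h₂⟩ <;>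
      nlinarith
  -- the Möbius map with `h y = 0` and `h' = 1 / (c + s * (x - y)) ^ 2`
  set h : ℝ → ℝ := fun x => (x - y) / (c * (c + s * (x - y))) with h_def
  have hh : ∀ x ∈ uIcc t y, HasDerivAt h (1 / (c + s * (x - y)) ^ 2) x := by
    intro x hx
    have hd := ((hasDerivAt_id' x).sub_const y).const_mul s |>.const_add c |>.const_mul c
    refine (((hasDerivAt_id' x).sub_const y).fun_div hd
      (mul_ne_zero hc.ne' (hl x hx).ne')).congr_deriv ?_
    field_simp
    ring
  have hmono : StrictMonoOn (fun x => h x - f x) (uIcc t y) := by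
    refine strictMonoOn_of_hasDerivWithinAt_pos (convex_uIcc t y)
      (fun x hx => ((hh x hx).sub (hf x (hseg hx))).continuousAt.continuousWithinAt)
      (fun x hx => ((hh x (interior_subset hx)).sub
        (hf x (hseg (interior_subset hx)))).hasDerivWithinAt) fun x hx => ?_
    have hxy : x ≠ y := by
      rintro rfl
      simp only [uIcc, interior_Icc, mem_Ioo, inf_lt_right, lt_sup_iff] at hx
      exact hx.1 (hx.2.resolve_right (lt_irrefl x)).le
    have hx' := interior_subset hx
    rw [sub_pos, lt_div_iff₀ (pow_pos (hl x hx') 2)]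
    exact hlt x (hseg hx') hxy (hl x hx')
  have hsign : 0 < (h t - f t - (h y - f y)) * (t - y) := by
    rcases hty.lt_or_gt with hty | hty
    · exact mul_pos_of_neg_of_neg (sub_neg.2 (hmono left_mem_uIcc right_mem_uIcc hty))
        (sub_neg.2 hty)
    · exact mul_pos (sub_pos.2 (hmono right_mem_uIcc left_mem_uIcc hty)) (sub_pos.2 hty)
  set L := c * (c + s * (t - y)) with hL_def
  have hL : 0 < L := mul_pos hc hlt₀
  have hd : t - y ≠ 0 := sub_ne_zero.2 hty
  have hsign' : 0 < (t - y - (f t - f y) * L) * (t - y) := by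
    have e : (h t - f t - (h y - f y)) * L = (t - y - (f t - f y) * L) := by
      simp only [h_def, ← hL_def, sub_self, zero_div]
      field_simp
      ring
    rw [← e, mul_right_comm]
    exact mul_pos hsign hL
  have e : slope f y t * L = 1 - (t - y - (f t - f y) * L) * (t - y) / (t - y) ^ 2 := by
    rw [slope_def_field]
    field_simp
    ring
  rw [e, sub_lt_self_iff]
  exact div_pos hsign' (sq_pos_of_ne_zero hd)

lemma slope_mul_slope_lt_of_tangent_bounds {f : ℝ → ℝ} {f' c s t₁ y t₂ : ℝ}
    (h₁ : t₁ < y) (h₂ : y < t₂) (hp : 0 < slope f t₁ y) (hq : 0 < slope f y t₂)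
    (hc : f' * c ^ 2 = 1)
    (hb₁ : slope f y t₁ * (c * (c + s * (t₁ - y))) < 1)
    (hb₂ : slope f y t₂ * (c * (c + s * (t₂ - y))) < 1) :
    slope f t₁ y * slope f y t₂ < f' * slope f t₁ t₂ := by
  rw [slope_comm] at hb₁
  have hsplit := mul_slope_eq_add_mul_slope f t₁ y t₂
  have hT : 0 < t₂ - t₁ := by linarith
  have h₁' := mul_lt_mul_of_pos_right hb₁ (mul_pos hq (sub_pos.2 h₂))
  have h₂' := mul_lt_mul_of_pos_right hb₂ (mul_pos hp (sub_pos.2 h₁))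
  have hc' : slope f t₁ y * slope f y t₂ * c ^ 2 * (t₂ - t₁) < (t₂ - t₁) * slope f t₁ t₂ := by
    linear_combination h₁' + h₂' - hsplit
  have hmain : slope f t₁ y * slope f y t₂ * c ^ 2 < slope f t₁ t₂ :=
    lt_of_mul_lt_mul_right (by linarith) hT.le
  have hf' : 0 < f' := by nlinarith [sq_nonneg c]
  calc slope f t₁ y * slope f y t₂ = f' * (slope f t₁ y * slope f y t₂ * c ^ 2) := by
        linear_combination (-(slope f t₁ y * slope f y t₂)) * hc
    _ < f' * slope f t₁ t₂ := mul_lt_mul_of_pos_left hmain hf'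

lemma StrictConvexOn.add_mul_sub_lt {S : Set ℝ} {g : ℝ → ℝ} {g' x y : ℝ}
    (hg : StrictConvexOn ℝ S g) (hd : HasDerivAt g g' y) (hy : y ∈ S) (hx : x ∈ S)
    (hxy : x ≠ y) : g y + g' * (x - y) < g x := by
  rcases hxy.lt_or_gt with h | h
  · have := hg.slope_lt_of_hasDerivAt hx hy h hd
    rw [slope_def_field, div_lt_iff₀ (sub_pos.2 h)] at this
    linarith
  · have := hg.lt_slope_of_hasDerivAt hy hx h hd
    rw [slope_def_field, lt_div_iff₀ (sub_pos.2 h)] at this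
    linarith

lemma HasDerivAt.rpow_neg_half {f : ℝ → ℝ} {f' x : ℝ} (hf : HasDerivAt f f' x) (hx : 0 < f x) :
    HasDerivAt (fun y => f y ^ (-(1 / 2) : ℝ)) (-(1 / 2) * f' * f x ^ (-(3 / 2) : ℝ)) x :=
  (hf.rpow_const (Or.inl hx.ne')).congr_deriv (by norm_num [mul_comm])

lemma strictConvexOn_rpow_neg_half {f₁ f₂ f₃ : ℝ → ℝ} {V : Set ℝ} (hV : Convex ℝ V)
    (hf₁ : ∀ x ∈ V, HasDerivAt f₁ (f₂ x) x) (hf₂ : ∀ x ∈ V, HasDerivAt f₂ (f₃ x) x)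
    (hpos : ∀ x ∈ V, 0 < f₁ x) (hS : ∀ x ∈ V, f₃ x * f₁ x < 3 / 2 * f₂ x ^ 2) :
    StrictConvexOn ℝ V fun x => f₁ x ^ (-(1 / 2) : ℝ) := by
  have hg' : ∀ x ∈ V, HasDerivAt (fun y => -(1 / 2) * f₂ y * f₁ y ^ (-(3 / 2) : ℝ))
      (-(1 / 2) * f₃ x * f₁ x ^ (-(3 / 2) : ℝ)
        + -(1 / 2) * f₂ x * (f₂ x * (-(3 / 2)) * f₁ x ^ (-(3 / 2) - 1 : ℝ))) x :=
    fun x hx => ((hf₂ x hx).const_mul _).mul ((hf₁ x hx).rpow_const (Or.inl (hpos x hx).ne'))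
  have hmono : StrictMonoOn (fun y => -(1 / 2) * f₂ y * f₁ y ^ (-(3 / 2) : ℝ)) V := by
    refine strictMonoOn_of_forall_hasDerivAt_pos hV hg' fun x hx => ?_
    have h₁ := hpos x hx
    have hsplit : f₁ x ^ (-(3 / 2) : ℝ) = f₁ x * f₁ x ^ (-(3 / 2) - 1 : ℝ) := by
      rw [← Real.rpow_one_add' h₁.le (by norm_num)]
      norm_num
    rw [hsplit]
    nlinarith [Real.rpow_pos_of_pos h₁ (-(3 / 2) - 1 : ℝ), hS x hx]
  refine (hmono.mono interior_subset).congr (fun x hx => ?_) |>.strictConvexOn_of_deriv hV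
    (fun x hx => ((hf₁ x hx).rpow_neg_half (hpos x hx)).continuousAt.continuousWithinAt)
  exact ((hf₁ x (interior_subset hx)).rpow_neg_half (hpos x (interior_subset hx))).deriv.symm

lemma slope_mul_slope_lt_deriv_mul_slope {f f₁ f₂ f₃ : ℝ → ℝ} {V : Set ℝ} (hV : Convex ℝ V)
    (hf : ∀ x ∈ V, HasDerivAt f (f₁ x) x) (hf₁ : ∀ x ∈ V, HasDerivAt f₁ (f₂ x) x)
    (hf₂ : ∀ x ∈ V, HasDerivAt f₂ (f₃ x) x) (hpos : ∀ x ∈ V, 0 < f₁ x)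
    (hS : ∀ x ∈ V, f₃ x * f₁ x < 3 / 2 * f₂ x ^ 2) {t₁ y t₂ : ℝ} (ht₁ : t₁ ∈ V) (ht₂ : t₂ ∈ V)
    (h₁ : t₁ < y) (h₂ : y < t₂) : slope f t₁ y * slope f y t₂ < f₁ y * slope f t₁ t₂ := by
  have hy : y ∈ V := hV.ordConnected.out ht₁ ht₂ ⟨h₁.le, h₂.le⟩
  set g : ℝ → ℝ := fun x => f₁ x ^ (-(1 / 2) : ℝ) with hg_def
  have hgpos : ∀ x ∈ V, 0 < g x := fun x hx => Real.rpow_pos_of_pos (hpos x hx) _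
  have hgsq : ∀ x ∈ V, f₁ x * g x ^ 2 = 1 := fun x hx => by
    rw [hg_def, ← Real.rpow_natCast, ← Real.rpow_mul (hpos x hx).le]
    norm_num [Real.rpow_neg_one, (hpos x hx).ne']
  have hdg := (hf₁ y hy).rpow_neg_half (hpos y hy)
  have hconv := strictConvexOn_rpow_neg_half hV hf₁ hf₂ hpos hS
  have hmono := strictMonoOn_of_forall_hasDerivAt_pos hV hf hpos
  have hbound : ∀ t ∈ V, t ≠ y → slope f y t * (g y * (g y + -(1 / 2) * f₂ y
      * f₁ y ^ (-(3 / 2) : ℝ) * (t - y))) < 1 := by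
    refine fun t ht hty => slope_mul_lt_one_of_deriv_mul_sq_lt hV hf hpos (hgpos y hy)
      (fun x hx hxy hl => ?_) hy ht hty
    have htan := hconv.add_mul_sub_lt hdg hy hx hxy
    calc _ < f₁ x * g x ^ 2 := mul_lt_mul_of_pos_left (pow_lt_pow_left₀ htan hl.le two_ne_zero)
          (hpos x hx)
      _ = 1 := hgsq x hx
  exact slope_mul_slope_lt_of_tangent_bounds h₁ h₂ (hmono.slope_pos ht₁ hy h₁.ne)
    (hmono.slope_pos hy ht₂ h₂.ne) (hgsq y hy) (hbound t₁ ht₁ h₁.ne) (hbound t₂ ht₂ h₂.ne')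

lemma crDistortion_lt_one_of_deriv_pos {f f₁ f₂ f₃ : ℝ → ℝ} {V : Set ℝ} (hV : Convex ℝ V)
    (hf : ∀ x ∈ V, HasDerivAt f (f₁ x) x) (hf₁ : ∀ x ∈ V, HasDerivAt f₁ (f₂ x) x)
    (hf₂ : ∀ x ∈ V, HasDerivAt f₂ (f₃ x) x) (hpos : ∀ x ∈ V, 0 < f₁ x)
    (hS : ∀ x ∈ V, f₃ x * f₁ x < 3 / 2 * f₂ x ^ 2) {t₁ m₁ m₂ t₂ : ℝ}
    (h₁ : t₁ < m₁) (h₂ : m₁ < m₂) (h₃ : m₂ < t₂) (hsub : Icc t₁ t₂ ⊆ V) :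
    crDistortion f t₁ m₁ m₂ t₂ < 1 := by
  have ht : t₁ ≤ t₂ := (h₁.trans (h₂.trans h₃)).le
  exact crDistortion_lt_one_of_slope_mul_slope_lt (fun y hy => hf y (hsub hy))
    (fun y hy => hpos y (hsub hy))
    (fun y hy => slope_mul_slope_lt_deriv_mul_slope hV hf hf₁ hf₂ hpos hS (hsub (left_mem_Icc.2 ht))
      (hsub (right_mem_Icc.2 ht)) hy.1 hy.2) h₁ h₂ h₃

lemma crDistortion_lt_one_of_deriv_ne_zero {f f₁ f₂ f₃ : ℝ → ℝ} {V : Set ℝ} (hV : Convex ℝ V)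
    (hf : ∀ x ∈ V, HasDerivAt f (f₁ x) x) (hf₁ : ∀ x ∈ V, HasDerivAt f₁ (f₂ x) x)
    (hf₂ : ∀ x ∈ V, HasDerivAt f₂ (f₃ x) x) (hne : ∀ x ∈ V, f₁ x ≠ 0)
    (hS : ∀ x ∈ V, f₃ x * f₁ x < 3 / 2 * f₂ x ^ 2) {t₁ m₁ m₂ t₂ : ℝ}
    (h₁ : t₁ < m₁) (h₂ : m₁ < m₂) (h₃ : m₂ < t₂) (hsub : Icc t₁ t₂ ⊆ V) :
    crDistortion f t₁ m₁ m₂ t₂ < 1 := by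
  rcases hasDerivWithinAt_forall_lt_or_forall_gt_of_forall_ne hV
    (fun x hx => (hf x hx).hasDerivWithinAt) hne with hneg | hpos
  · rw [← crDistortion_neg]
    exact crDistortion_lt_one_of_deriv_pos hV (fun x hx => (hf x hx).neg)
      (fun x hx => (hf₁ x hx).neg) (fun x hx => (hf₂ x hx).neg) (fun x hx => neg_pos.2 (hneg x hx))
      (fun x hx => by simpa only [neg_mul_neg, neg_sq] using hS x hx) h₁ h₂ h₃ hsub
  · exact crDistortion_lt_one_of_deriv_pos hV hf hf₁ hf₂ hpos hS h₁ h₂ h₃ hsub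

lemma schwarzianDeriv_eq {f : ℝ → ℝ} {x : ℝ} (h₀ : deriv f x ≠ 0)
    (h₁ : DifferentiableAt ℝ (deriv f) x) (h₂ : DifferentiableAt ℝ (deriv (deriv f)) x) :
    schwarzianDeriv f x = (deriv (deriv (deriv f)) x * deriv f x
      - 3 / 2 * deriv (deriv f) x ^ 2) / deriv f x ^ 2 := by
  rw [schwarzianDeriv, deriv_fun_div h₂ h₁ h₀]
  field_simp
  ring

theorem negative_schwarzian_contracts_small_cross_ratios_general
    (f : ℝ → ℝ) (U : Set ℝ) (hUopen : IsOpen U) (hUconn : U.OrdConnected)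
    (hf : ContDiffOn ℝ 3 f U)
    (hdiffeo : ∀ x ∈ U, deriv f x ≠ 0)
    (hS : ∀ x ∈ U, schwarzianDeriv f x < 0) :
    ∀ x ∈ U, ∃ V ∈ nhds x, V ⊆ U ∧
      ∀ t₁ m₁ m₂ t₂ : ℝ, t₁ < m₁ → m₁ < m₂ → m₂ < t₂ → Set.Icc t₁ t₂ ⊆ V →
        crDistortion f t₁ m₁ m₂ t₂ < 1 := by
  have hf₁ : ContDiffOn ℝ 2 (deriv f) U := hf.deriv_of_isOpen hUopen (by norm_num)
  have hf₂ : ContDiffOn ℝ 1 (deriv (deriv f)) U := hf₁.deriv_of_isOpen hUopen (by norm_num)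
  have hd {g : ℝ → ℝ} {n : WithTop ℕ∞} (hg : ContDiffOn ℝ n g U) (hn : n ≠ 0) {x : ℝ}
      (hx : x ∈ U) : HasDerivAt g (deriv g x) x :=
    ((hg.differentiableOn hn).differentiableAt (hUopen.mem_nhds hx)).hasDerivAt
  have hS' : ∀ x ∈ U, deriv (deriv (deriv f)) x * deriv f x < 3 / 2 * deriv (deriv f) x ^ 2 := by
    intro x hx
    have h := hS x hx
    rw [schwarzianDeriv_eq (hdiffeo x hx) (hd hf₁ (by norm_num) hx).differentiableAt
      (hd hf₂ (by norm_num) hx).differentiableAt] at h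
    exact sub_neg.1 (neg_of_div_neg_left h (sq_nonneg _))
  intro x hx
  exact ⟨U, hUopen.mem_nhds hx, subset_rfl, fun t₁ m₁ m₂ t₂ h₁ h₂ h₃ hsub =>
    crDistortion_lt_one_of_deriv_ne_zero hUconn.convex (fun y hy => hd hf (by norm_num) hy)
      (fun y hy => hd hf₁ (by norm_num) hy) (fun y hy => hd hf₂ (by norm_num) hy) hdiffeo hS'
      h₁ h₂ h₃ hsub⟩

/-- A `C³` diffeomorphism with negative Schwarzian derivative contracts
the cross-ratio of all sufficiently small pairs of intervals: around every point of `U`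
there is a neighborhood `V` such that `D(f; M, T) < 1` whenever `M ⋐ T ⊆ V`. -/
theorem negative_schwarzian_contracts_small_cross_ratios
    (f : ℝ → ℝ) (U : Set ℝ) (hUopen : IsOpen U) (hUconn : U.OrdConnected)
    (hf : ContDiffOn ℝ 3 f U) (hinj : Set.InjOn f U)
    (hdiffeo : ∀ x ∈ U, deriv f x ≠ 0)
    (hS : ∀ x ∈ U, schwarzianDeriv f x < 0) :
    ∀ x ∈ U, ∃ V ∈ nhds x, V ⊆ U ∧
      ∀ t₁ m₁ m₂ t₂ : ℝ, t₁ < m₁ → m₁ < m₂ → m₂ < t₂ → Set.Icc t₁ t₂ ⊆ V →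
        crDistortion f t₁ m₁ m₂ t₂ < 1 :=
  negative_schwarzian_contracts_small_cross_ratios_general f U hUopen hUconn hf hdiffeo hS
end
end

section
/- Let {Q_n}_{n≥0} be a fine grid on S^1 with fine grid constants a and ρ, and let I ⊂ S^1 be an interval with non-empty interior. Let n = n(I) be the smallest natural number such that I contains some atom Δ of Q_n. Then there exists an interval U ⊇ I such that: (i) U is the union of at most 2a atoms of Q_n; and (ii) |U| ≤ α^{−1}(1+ρ)|I|, where α = (a ρ^{a−1})^{−1}. -/
open Set Filter MeasureTheory

noncomputable section

/-- A *fine grid*: a sequence of finite interval partitions of the circle `S¹ = ℝ/ℤ`,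
encoded by ℤ-indexed, 1-periodic increasing sequences of division points on the real
line. `Q_n` has `m n` atoms, its atoms are `[pts n k, pts n (k+1)]`; `Q_0` is the
trivial partition, each `Q_{n+1}` strictly refines `Q_n`, each atom of `Q_n` is the
disjoint union of at most `a` atoms of `Q_{n+1}`, and adjacent atoms of `Q_n` have
`ρ`-comparable lengths. -/
structure FineGrid where
  /-- number of atoms of the partition `Q_n` -/
  m : ℕ → ℕ
  /-- division points of `Q_n`, as lifts -/
  pts : ℕ → ℤ → ℝ
  m_pos : ∀ n, 0 < m n
  /-- `Q_0` is the trivial partition -/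
  m_zero : m 0 = 1
  pts_mono : ∀ n, StrictMono (pts n)
  pts_periodic : ∀ n k, pts n (k + (m n : ℤ)) = pts n k + 1
  /-- the constant `a` -/
  a : ℕ
  two_le_a : 2 ≤ a
  /-- each `Q_{n+1}` is a strict refinement of `Q_n` -/
  strict_refines : ∀ n, m n < m (n + 1)
  /-- each atom of `Q_n` is the disjoint union of at least one and at most `a`
  consecutive atoms of `Q_{n+1}` -/
  refines : ∀ n k, ∃ k₁ k₂ : ℤ, pts (n + 1) k₁ = pts n k ∧ pts (n + 1) k₂ = pts n (k + 1) ∧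
    k₁ < k₂ ∧ k₂ - k₁ ≤ (a : ℤ)
  /-- the constant `ρ` -/
  rho : ℝ
  one_lt_rho : 1 < rho
  /-- adjacent atoms of `Q_n` have comparable lengths -/
  adj_comparable : ∀ n k,
    rho⁻¹ * (pts n (k + 1) - pts n k) ≤ pts n (k + 2) - pts n (k + 1) ∧
      pts n (k + 2) - pts n (k + 1) ≤ rho * (pts n (k + 1) - pts n k)

/-- The (arc of the) circle with lift `[x₁, x₂]` contains some atom of `Q_n`. -/
def ContainsAtom (Q : FineGrid) (n : ℕ) (x₁ x₂ : ℝ) : Prop :=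
  ∃ k j : ℤ, x₁ ≤ Q.pts n k + (j : ℝ) ∧ Q.pts n (k + 1) + (j : ℝ) ≤ x₂

/-! By minimality of `n`, the interval `I` contains no atom of `Q_{n-1}`, so it lies in the
union `U` of two adjacent atoms of `Q_{n-1}`, which is a union of at most `2a` atoms of `Q_n`.
The atom `Δ ⊆ I` of `Q_n` lies in one of these two atoms, which has length at most `α⁻¹ |Δ|`,
and the other one is at most `ρ` times as long; hence
`|U| ≤ (1 + ρ) α⁻¹ |Δ| ≤ (1 + ρ) α⁻¹ |I|`.
For `n = 0` the atom of `Q_0` has length `1 ≥ |I|`, so `I` is that atom. -/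

namespace FineGrid

variable (Q : FineGrid)

lemma rho_pos : 0 < Q.rho := zero_lt_one.trans Q.one_lt_rho

lemma one_le_a_mul_rho_pow : 1 ≤ (Q.a : ℝ) * Q.rho ^ (Q.a - 1) :=
  one_le_mul_of_one_le_of_one_le (by exact_mod_cast (one_le_two.trans Q.two_le_a))
    (one_le_pow₀ Q.one_lt_rho.le)

def atomLen (n : ℕ) (k : ℤ) : ℝ := Q.pts n (k + 1) - Q.pts n k

lemma atomLen_pos (n : ℕ) (k : ℤ) : 0 < Q.atomLen n k :=
  sub_pos.mpr (Q.pts_mono n (lt_add_one k))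

lemma atomLen_zero (k : ℤ) : Q.atomLen 0 k = 1 := by
  have h := Q.pts_periodic 0 k
  rw [Q.m_zero, Nat.cast_one] at h
  rw [atomLen, h, add_sub_cancel_left]

lemma pts_add_mul (n : ℕ) (k t : ℤ) : Q.pts n (k + t * Q.m n) = Q.pts n k + t := by
  induction t using Int.induction_on with
  | zero => simp
  | succ i ih =>
    rw [add_mul, one_mul, ← add_assoc, Q.pts_periodic, ih]
    push_cast
    ring
  | pred i ih =>
    have h := Q.pts_periodic n (k + (-i - 1) * Q.m n)
    rw [show k + (-i - 1) * Q.m n + Q.m n = k + -i * Q.m n by ring, ih] at h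
    push_cast at h ⊢
    linarith

lemma exists_pts_le_lt (n : ℕ) (x : ℝ) : ∃ k, Q.pts n k ≤ x ∧ x < Q.pts n (k + 1) := by
  set t := ⌊x - Q.pts n 0⌋
  have hlow : Q.pts n (0 + t * Q.m n) ≤ x := by
    rw [Q.pts_add_mul]
    linarith [Int.floor_le (x - Q.pts n 0)]
  have hhigh : x < Q.pts n (0 + (t + 1) * Q.m n) := by
    rw [Q.pts_add_mul]
    push_cast
    linarith [Int.lt_floor_add_one (x - Q.pts n 0)]
  obtain ⟨k, hk, hmax⟩ := Int.exists_greatest_of_bdd (P := fun z => Q.pts n z ≤ x)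
    ⟨_, fun z hz => ((Q.pts_mono n).lt_iff_lt.mp (hz.trans_lt hhigh)).le⟩ ⟨_, hlow⟩
  exact ⟨k, hk, not_le.mp fun h => by linarith [hmax (k + 1) h]⟩

lemma containsAtom_iff (n : ℕ) (x₁ x₂ : ℝ) :
    ContainsAtom Q n x₁ x₂ ↔ ∃ k, x₁ ≤ Q.pts n k ∧ Q.pts n (k + 1) ≤ x₂ := by
  constructor
  · rintro ⟨k, j, h₁, h₂⟩
    refine ⟨k + j * Q.m n, by rwa [Q.pts_add_mul], ?_⟩
    rwa [add_right_comm, Q.pts_add_mul]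
  · rintro ⟨k, h₁, h₂⟩
    exact ⟨k, 0, by simpa using h₁, by simpa using h₂⟩

lemma atomLen_le_rho_mul_of_abs_sub_le_one (n : ℕ) {i j : ℤ} (h : |i - j| ≤ 1) :
    Q.atomLen n i ≤ Q.rho * Q.atomLen n j := by
  have hadj := Q.adj_comparable n
  rw [abs_le] at h
  rcases show i = j ∨ i = j + 1 ∨ j = i + 1 by omega with rfl | rfl | rfl
  · exact le_mul_of_one_le_left (Q.atomLen_pos n i).le Q.one_lt_rho.le
  · simpa only [atomLen, add_assoc, one_add_one_eq_two] using (hadj j).2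
  · have h := (hadj i).1
    rw [inv_mul_le_iff₀ Q.rho_pos] at h
    simpa only [atomLen, add_assoc, one_add_one_eq_two] using h

lemma atomLen_le_rho_pow_mul (n D : ℕ) {i j : ℤ} (h : |i - j| ≤ D) :
    Q.atomLen n i ≤ Q.rho ^ D * Q.atomLen n j := by
  induction D generalizing i with
  | zero =>
    obtain rfl : i = j := by rw [abs_le] at h; omega
    simp
  | succ D ih =>
    -- step from `i` to the nearest index within distance `D` of `j`
    set i' := max (j - D) (min (j + D) i)
    calc Q.atomLen n i ≤ Q.rho * Q.atomLen n i' :=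
          Q.atomLen_le_rho_mul_of_abs_sub_le_one n (by rw [abs_le] at h ⊢; omega)
      _ ≤ Q.rho * (Q.rho ^ D * Q.atomLen n j) :=
          mul_le_mul_of_nonneg_left (ih (by rw [abs_le]; omega)) Q.rho_pos.le
      _ = Q.rho ^ (D + 1) * Q.atomLen n j := by ring

lemma pts_add_sub_le (n : ℕ) (k : ℤ) (c : ℕ) {M : ℝ}
    (h : ∀ i, k ≤ i → i < k + c → Q.atomLen n i ≤ M) :
    Q.pts n (k + c) - Q.pts n k ≤ c * M := by
  induction c with
  | zero => simp
  | succ c ih =>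
    have hlast := h (k + c) (by omega) (by push_cast; omega)
    have hinit := ih fun i hi hi' => h i hi (by push_cast; omega)
    rw [atomLen] at hlast
    push_cast at hlast ⊢
    rw [← add_assoc]
    linarith

lemma atomLen_le_mul_atomLen_succ (n : ℕ) {i p : ℤ} (h₁ : Q.pts n i ≤ Q.pts (n + 1) p)
    (h₂ : Q.pts (n + 1) (p + 1) ≤ Q.pts n (i + 1)) :
    Q.atomLen n i ≤ Q.a * Q.rho ^ (Q.a - 1) * Q.atomLen (n + 1) p := by
  obtain ⟨r₁, r₂, hr₁, hr₂, -, hr⟩ := Q.refines n i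
  have hr₁p : r₁ ≤ p := (Q.pts_mono (n + 1)).le_iff_le.mp (hr₁ ▸ h₁)
  have hpr₂ : p + 1 ≤ r₂ := (Q.pts_mono (n + 1)).le_iff_le.mp (hr₂ ▸ h₂)
  have ha := Q.two_le_a
  obtain ⟨c, rfl⟩ : ∃ c : ℕ, r₂ = r₁ + c := ⟨(r₂ - r₁).toNat, by omega⟩
  have hca : (c : ℝ) ≤ Q.a := by exact_mod_cast (show (c : ℤ) ≤ Q.a by omega)
  have hsum := Q.pts_add_sub_le (n + 1) r₁ c fun i hi hi' =>
    Q.atomLen_le_rho_pow_mul (n + 1) (Q.a - 1) (i := i) (j := p) (by rw [abs_le]; omega)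
  rw [hr₁, hr₂] at hsum
  calc Q.atomLen n i ≤ c * (Q.rho ^ (Q.a - 1) * Q.atomLen (n + 1) p) := hsum
    _ ≤ Q.a * (Q.rho ^ (Q.a - 1) * Q.atomLen (n + 1) p) :=
      mul_le_mul_of_nonneg_right hca
        (mul_pos (pow_pos Q.rho_pos _) (Q.atomLen_pos _ _)).le
    _ = _ := by ring

lemma exists_parent (n : ℕ) (p : ℤ) :
    ∃ i, Q.pts n i ≤ Q.pts (n + 1) p ∧ Q.pts (n + 1) (p + 1) ≤ Q.pts n (i + 1) := by
  obtain ⟨i, hi, hi'⟩ := Q.exists_pts_le_lt n (Q.pts (n + 1) p)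
  obtain ⟨-, r, -, hr, -, -⟩ := Q.refines n i
  refine ⟨i, hi, ?_⟩
  rw [← hr] at hi' ⊢
  exact (Q.pts_mono (n + 1)).monotone ((Q.pts_mono (n + 1)).lt_iff_lt.mp hi')

lemma exists_refinement_of_two_atoms (n : ℕ) (l : ℤ) :
    ∃ (r : ℤ) (c : ℕ), 1 ≤ c ∧ c ≤ 2 * Q.a ∧
      Q.pts (n + 1) r = Q.pts n l ∧ Q.pts (n + 1) (r + c) = Q.pts n (l + 2) := by
  obtain ⟨r₁, r₂, h₁, h₂, h₁₂, h₁₂a⟩ := Q.refines n l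
  obtain ⟨r₂', r₃, h₂', h₃, h₂₃, h₂₃a⟩ := Q.refines n (l + 1)
  obtain rfl : r₂' = r₂ := (Q.pts_mono (n + 1)).injective (h₂'.trans h₂.symm)
  refine ⟨r₁, (r₃ - r₁).toNat, by omega, by omega, h₁, ?_⟩
  rw [show r₁ + ((r₃ - r₁).toNat : ℤ) = r₃ by omega, h₃, add_assoc, one_add_one_eq_two]

lemma pts_add_two_sub_le (n : ℕ) {l i : ℤ} (hl : l ≤ i) (hi : i ≤ l + 1) :
    Q.pts n (l + 2) - Q.pts n l ≤ (1 + Q.rho) * Q.atomLen n i := by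
  have hsplit : Q.pts n (l + 2) - Q.pts n l = Q.atomLen n l + Q.atomLen n (l + 1) := by
    rw [atomLen, atomLen, add_assoc, one_add_one_eq_two]
    ring
  have h₁ := Q.atomLen_le_rho_mul_of_abs_sub_le_one n (i := l) (j := l + 1) (by simp)
  have h₂ := Q.atomLen_le_rho_mul_of_abs_sub_le_one n (i := l + 1) (j := l) (by simp)
  rcases show i = l ∨ i = l + 1 by omega with rfl | rfl <;> linarith

lemma exists_adjacent_atoms_cover (n : ℕ) {x₁ x₂ : ℝ}
    (hn : ContainsAtom Q (n + 1) x₁ x₂) (hn' : ¬ContainsAtom Q n x₁ x₂) :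
    ∃ l, Q.pts n l ≤ x₁ ∧ x₂ ≤ Q.pts n (l + 2) ∧
      Q.pts n (l + 2) - Q.pts n l ≤ (Q.a * Q.rho ^ (Q.a - 1)) * (1 + Q.rho) * (x₂ - x₁) := by
  obtain ⟨p, hp₁, hp₂⟩ := (Q.containsAtom_iff (n + 1) x₁ x₂).mp hn
  obtain ⟨l, hl, hl'⟩ := Q.exists_pts_le_lt n x₁
  have hx₂ : x₂ < Q.pts n (l + 2) := by
    by_contra! h
    refine hn' ((Q.containsAtom_iff n x₁ x₂).mpr ⟨l + 1, hl'.le, ?_⟩)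
    rwa [add_assoc, one_add_one_eq_two]
  obtain ⟨i, hi, hi'⟩ := Q.exists_parent n p
  have hp := Q.pts_mono (n + 1) (lt_add_one p)
  have hli : l < i + 1 := (Q.pts_mono n).lt_iff_lt.mp (by linarith)
  have hil : i < l + 2 := (Q.pts_mono n).lt_iff_lt.mp (by linarith)
  have hρ := Q.rho_pos
  refine ⟨l, hl, hx₂.le, ?_⟩
  calc Q.pts n (l + 2) - Q.pts n l ≤ (1 + Q.rho) * Q.atomLen n i :=
        Q.pts_add_two_sub_le n (by omega) (by omega)
    _ ≤ (1 + Q.rho) * (Q.a * Q.rho ^ (Q.a - 1) * Q.atomLen (n + 1) p) := by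
        gcongr
        exact Q.atomLen_le_mul_atomLen_succ n hi hi'
    _ ≤ (1 + Q.rho) * (Q.a * Q.rho ^ (Q.a - 1) * (x₂ - x₁)) := by
        gcongr
        rw [atomLen]
        linarith
    _ = _ := by ring

end FineGrid

theorem interval_contained_in_few_atoms_general
    (Q : FineGrid) (x₁ x₂ : ℝ) (hx' : x₂ ≤ x₁ + 1)
    (n : ℕ) (hn : ContainsAtom Q n x₁ x₂)
    (hmin : ∀ n' : ℕ, n' < n → ¬ContainsAtom Q n' x₁ x₂) :
    ∃ (k j : ℤ) (cnt : ℕ), 1 ≤ cnt ∧ cnt ≤ 2 * Q.a ∧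
      Q.pts n k + (j : ℝ) ≤ x₁ ∧ x₂ ≤ Q.pts n (k + (cnt : ℤ)) + (j : ℝ) ∧
      Q.pts n (k + (cnt : ℤ)) - Q.pts n k ≤
        ((Q.a : ℝ) * Q.rho ^ (Q.a - 1)) * (1 + Q.rho) * (x₂ - x₁) := by
  cases n with
  | zero =>
    obtain ⟨p, hp₁, hp₂⟩ := (Q.containsAtom_iff 0 x₁ x₂).mp hn
    have hp := Q.atomLen_zero p
    rw [FineGrid.atomLen] at hp
    refine ⟨p, 0, 1, le_rfl, by linarith [Q.two_le_a], by push_cast; linarith,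
      by push_cast; linarith, ?_⟩
    rw [Nat.cast_one, hp]
    refine one_le_mul_of_one_le_of_one_le ?_ (by linarith)
    exact one_le_mul_of_one_le_of_one_le Q.one_le_a_mul_rho_pow (by linarith [Q.rho_pos])
  | succ n =>
    obtain ⟨l, hl, hl₂, hU⟩ := Q.exists_adjacent_atoms_cover n hn (hmin n n.lt_succ_self)
    obtain ⟨r, c, hc₁, hc₂, hr, hrc⟩ := Q.exists_refinement_of_two_atoms n l
    exact ⟨r, 0, c, hc₁, hc₂, by simpa [hr] using hl, by simpa [hrc] using hl₂,
      by rwa [hr, hrc]⟩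

/-- Let `{Q_n}` be a fine grid with constants `a, ρ`, let `I = [x₁, x₂]`
be an interval of the circle with non-empty interior, and let `n = n(I)` be smallest such
that `I` contains an atom of `Q_n`. Then there is an interval `U ⊇ I` which is the union
of at most `2a` atoms of `Q_n` and with `|U| ≤ α⁻¹ (1 + ρ) |I|`, where
`α = (a ρ^{a-1})⁻¹`. -/
theorem interval_contained_in_few_atoms
    (Q : FineGrid) (x₁ x₂ : ℝ) (hx : x₁ < x₂) (hx' : x₂ ≤ x₁ + 1)
    (n : ℕ) (hn : ContainsAtom Q n x₁ x₂)
    (hmin : ∀ n' : ℕ, n' < n → ¬ContainsAtom Q n' x₁ x₂) :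
    ∃ (k j : ℤ) (cnt : ℕ), 1 ≤ cnt ∧ cnt ≤ 2 * Q.a ∧
      Q.pts n k + (j : ℝ) ≤ x₁ ∧ x₂ ≤ Q.pts n (k + (cnt : ℤ)) + (j : ℝ) ∧
      Q.pts n (k + (cnt : ℤ)) - Q.pts n k ≤
        ((Q.a : ℝ) * Q.rho ^ (Q.a - 1)) * (1 + Q.rho) * (x₂ - x₁) :=
  interval_contained_in_few_atoms_general Q x₁ x₂ hx' n hn hmin
end
end
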